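/- arXiv:1706.01508 — 4 statements merged into one kernel-verified Lean document; each statement's English description precedes it below -/
import Mathlib

section
/- In a time-dependent network, for every walk W from s to d there exists a walk P from s to d with no repeated vertices such that A_P(t) ≤ A_W(t) for every t. -/
open scoped ENNReal

/-- Arrival function of a walk: starting at `u` and then visiting the vertices of `l` in
order, departing at time `t`. -/
def walkArr {V : Type*} (A : V → V → ℝ≥0∞ → ℝ≥0∞) : V → List V → ℝ≥0∞ → ℝ≥0∞
  | _, [], t => t
  | u, v :: l, t => walkArr A v l (A u v t)

/-- `l` (together with start vertex `s`) encodes a walk from `s` to `d`: the walk is the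
nonempty vertex sequence `s :: l`, whose last vertex must be `d`. -/
def IsWalkTo {V : Type*} (s d : V) (l : List V) : Prop :=
  (s :: l).getLast (List.cons_ne_nil _ _) = d

/-- The end-to-end arrival function: infimum over all walks from `s` to `d`. -/
noncomputable def endToEnd {V : Type*} (A : V → V → ℝ≥0∞ → ℝ≥0∞) (s d : V) (t : ℝ≥0∞) :
    ℝ≥0∞ :=
  ⨅ l : {l : List V // IsWalkTo s d l}, walkArr A s l.1 t

/-- The FIFO conditions on a time-dependent network: each edge arrival function is
monotone and arrival is not before departure. -/
def FIFO {V : Type*} (A : V → V → ℝ≥0∞ → ℝ≥0∞) : Prop :=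
  ∀ u v : V, Monotone (A u v) ∧ ∀ t, t ≤ A u v t

/-!
A cycle `u … u` inside a walk can be cut out without arriving later: by FIFO the cycle brings
us back to `u` no earlier than we left it, and by monotonicity departing from `u` earlier never
makes the rest of the walk arrive later. Building the path from the end of the walk backwards,
each new vertex either extends the path or closes such a cycle, which is then cut out.
-/

section WalkArr

variable {V : Type*} {A : V → V → ℝ≥0∞ → ℝ≥0∞}

theorem isWalkTo_cons {s d v : V} {l : List V} : IsWalkTo s d (v :: l) ↔ IsWalkTo v d l := by
  simp only [IsWalkTo, List.getLast_cons_cons]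

theorem isWalkTo_append_cons {s d w : V} {l₁ l₂ : List V} :
    IsWalkTo s d (l₁ ++ w :: l₂) ↔ IsWalkTo w d l₂ := by
  simp only [IsWalkTo, ← List.cons_append,
    List.getLast_append_of_right_ne_nil _ _ (List.cons_ne_nil w l₂)]

theorem walkArr_append_cons (u w : V) (l₁ l₂ : List V) (t : ℝ≥0∞) :
    walkArr A u (l₁ ++ w :: l₂) t = walkArr A w l₂ (walkArr A u (l₁ ++ [w]) t) := by
  induction l₁ generalizing u t with
  | nil => rfl
  | cons x l₁ ih => exact ih x (A u x t)

theorem walkArr_monotone (hA : ∀ u v, Monotone (A u v)) (u : V) (l : List V) :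
    Monotone (walkArr A u l) := by
  induction l generalizing u with
  | nil => exact monotone_id
  | cons v l ih => exact (ih v).comp (hA u v)

theorem le_walkArr (hA : ∀ u v t, t ≤ A u v t) (u : V) (l : List V) (t : ℝ≥0∞) :
    t ≤ walkArr A u l t := by
  induction l generalizing u t with
  | nil => exact le_rfl
  | cons v l ih => exact (hA u v t).trans (ih v _)

theorem walkArr_le_walkArr_append_cons (hA : FIFO A) (u : V) (l₁ l₂ : List V) (t : ℝ≥0∞) :
    walkArr A u l₂ t ≤ walkArr A u (l₁ ++ u :: l₂) t := by
  rw [walkArr_append_cons]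
  exact walkArr_monotone (fun u v => (hA u v).1) u l₂ (le_walkArr (fun u v => (hA u v).2) u _ t)

end WalkArr

theorem exists_nodup_walk_le_general {V : Type*}
    (A : V → V → ℝ≥0∞ → ℝ≥0∞) (hA : FIFO A) (s d : V)
    (l : List V) (hl : IsWalkTo s d l) :
    ∃ l' : List V, IsWalkTo s d l' ∧ (s :: l').Nodup ∧
      ∀ t, walkArr A s l' t ≤ walkArr A s l t := by
  induction l generalizing s with
  | nil => exact ⟨[], hl, List.nodup_singleton s, fun _ => le_rfl⟩
  | cons v l ih =>
    obtain ⟨p, hp, hp_nodup, hp_le⟩ := ih v (isWalkTo_cons.mp hl)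
    have hvp_le : ∀ t, walkArr A s (v :: p) t ≤ walkArr A s (v :: l) t := fun t => hp_le (A s v t)
    by_cases hs : s ∈ v :: p
    · obtain ⟨p₁, p₂, hsplit⟩ := List.append_of_mem hs
      have hvp : IsWalkTo s d (v :: p) := isWalkTo_cons.mpr hp
      rw [hsplit] at hvp hp_nodup hvp_le
      refine ⟨p₂, isWalkTo_append_cons.mp hvp, hp_nodup.sublist (List.sublist_append_right p₁ _),
        fun t => ?_⟩
      exact (walkArr_le_walkArr_append_cons hA s p₁ p₂ t).trans (hvp_le t)
    · exact ⟨v :: p, isWalkTo_cons.mpr hp, List.nodup_cons.mpr ⟨hs, hp_nodup⟩, hvp_le⟩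

/-- For every walk `W` from `s` to `d` there is a walk `P` from `s` to `d` with no
repeated vertices whose arrival function is pointwise at most that of `W`. -/
theorem exists_nodup_walk_le {V : Type*} [Fintype V]
    (A : V → V → ℝ≥0∞ → ℝ≥0∞) (hA : FIFO A) (s d : V)
    (l : List V) (hl : IsWalkTo s d l) :
    ∃ l' : List V, IsWalkTo s d l' ∧ (s :: l').Nodup ∧
      ∀ t, walkArr A s l' t ≤ walkArr A s l t :=
  exists_nodup_walk_le_general A hA s d l hl
end

section
/- Let G be a finite simple graph with two distinguished terminal vertices s and d, and let (T, X) be a nice tree decomposition of G with at least two bags such that for every leaf index i of T with unique neighbor j, X j ⊊ X i. Then either T is a path (every vertex of T has degree at most 2), or there exist a leaf index i of T with unique neighbor j and a vertex v of G such that X i \ X j = {v} and v ∉ {s, d}. -/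
/-- `(T, X)` is a tree decomposition of the graph `G`: `T` is a tree on the index set,
every vertex is in some bag, every edge of `G` has both ends in some bag, and for every
vertex the set of bags containing it induces a connected subgraph of `T`. -/
structure IsTreeDecomp {V I : Type*} (G : SimpleGraph V) (T : SimpleGraph I)
    (X : I → Finset V) : Prop where
  isTree : T.IsTree
  mem_bag : ∀ v : V, ∃ i, v ∈ X i
  edge_bag : ∀ u v : V, G.Adj u v → ∃ i, u ∈ X i ∧ v ∈ X i
  support_connected : ∀ v : V, (T.induce {i | v ∈ X i}).Connected

/-- A tree decomposition is nice if adjacent bags are equal or differ by exactly one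
vertex. -/
def IsNice {V I : Type*} [DecidableEq V] (T : SimpleGraph I) (X : I → Finset V) : Prop :=
  ∀ i j : I, T.Adj i j →
    X i = X j ∨ (∃ v ∉ X j, X i = insert v (X j)) ∨ (∃ v ∉ X i, X j = insert v (X i))

/-- The graph `G` has treewidth at most `w`: it admits a tree decomposition all of whose
bags have at most `w + 1` vertices. -/
def TreewidthLE {V : Type*} (G : SimpleGraph V) (w : ℕ) : Prop :=
  ∃ (I : Type) (_ : Fintype I) (T : SimpleGraph I) (X : I → Finset V),
    IsTreeDecomp G T X ∧ ∀ i, (X i).card ≤ w + 1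

/-- For a nice tree decomposition with at least two bags in which every leaf bag strictly
contains its parent bag, either the decomposition tree is a path (all degrees at most 2)
or some leaf bag contains a vertex, exclusive to it relative to its parent, which is not
a terminal. -/
theorem path_or_nonterminal_leaf {V I : Type*} [Fintype V] [DecidableEq V]
    [Fintype I] [DecidableEq I]
    (G : SimpleGraph V) (s d : V)
    (T : SimpleGraph I) [DecidableRel T.Adj] (X : I → Finset V)
    (htd : IsTreeDecomp G T X) (hnice : IsNice T X)
    (h2 : 2 ≤ Fintype.card I)
    (hleaf : ∀ i j : I, T.degree i = 1 → T.Adj i j → X j ⊂ X i) :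
    (∀ i : I, T.degree i ≤ 2) ∨
      ∃ (i j : I) (v : V), T.degree i = 1 ∧ T.Adj i j ∧ X i \ X j = {v} ∧
        v ≠ s ∧ v ≠ d := by
  classical
  by_cases hdeg : ∀ i : I, T.degree i ≤ 2
  · exact Or.inl hdeg
  right
  push_neg at hdeg
  obtain ⟨c, hc⟩ := hdeg
  have hconn : T.Connected := htd.isTree.isConnected
  -- every vertex of T has a neighbor
  have hadj : ∀ i : I, ∃ j, T.Adj i j := by
    intro i
    obtain ⟨k, hk⟩ := Fintype.exists_ne_of_one_lt_card (by omega) i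
    obtain ⟨w⟩ := hconn i k
    exact ⟨w.getVert 1, w.adj_snd (SimpleGraph.Walk.not_nil_of_ne (Ne.symm hk))⟩
  have hdeg1 : ∀ i : I, 1 ≤ T.degree i := by
    intro i
    obtain ⟨j, hj⟩ := hadj i
    exact (T.degree_pos_iff_exists_adj i).2 ⟨j, hj⟩
  -- a leaf's neighbor is unique
  have huniq : ∀ i j k : I, T.degree i = 1 → T.Adj i j → T.Adj i k → j = k := by
    intro i j k hi hj hk
    have hcard : (T.neighborFinset i).card ≤ 1 := le_of_eq hi
    have hji : j ∈ T.neighborFinset i := by simpa using hj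
    have hki : k ∈ T.neighborFinset i := by simpa using hk
    exact Finset.card_le_one.mp hcard j hji k hki
  -- exclusivity: an exclusive vertex of a leaf appears in no other bag
  have hexcl : ∀ i j (v : V), T.degree i = 1 → T.Adj i j → v ∉ X j → v ∈ X i →
      ∀ k, k ≠ i → v ∉ X k := by
    intro i j v hi hj hvj hvi k hk hvk
    obtain ⟨w⟩ := htd.support_connected v ⟨i, hvi⟩ ⟨k, hvk⟩
    have hnil : ¬ w.Nil := SimpleGraph.Walk.not_nil_of_ne (fun h => hk (congrArg Subtype.val h).symm)
    have hadj2 := w.adj_snd hnil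
    have hadj3 : T.Adj i (w.getVert 1).val := hadj2
    have hjeq := huniq i j (w.getVert 1).val hi hj hadj3
    exact hvj (hjeq ▸ (w.getVert 1).prop)
  -- counting: at least 3 leaves
  set S : Finset I := Finset.univ.filter (fun i => T.degree i = 1) with hS
  have hsum : ∑ i, T.degree i = 2 * (Fintype.card I - 1) := by
    rw [SimpleGraph.sum_degrees_eq_twice_card_edges]
    have he := htd.isTree.card_edgeFinset
    omega
  have hcne1 : T.degree c ≠ 1 := by omega
  set g : I → ℕ := fun i => if i = c then 3 else if T.degree i = 1 then 1 else 2 with hg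
  have hgle : ∀ i ∈ Finset.univ, g i ≤ T.degree i := by
    intro i _
    by_cases hic : i = c
    · subst hic; simp only [hg, if_pos rfl]; omega
    · have := hdeg1 i
      simp only [hg, if_neg hic]
      by_cases h1 : T.degree i = 1 <;> simp [h1] <;> omega
  have hsum2 : ∑ i, (g i + (if T.degree i = 1 then 1 else 0)) =
      ∑ i : I, (2 + if i = c then 1 else 0) := by
    apply Finset.sum_congr rfl
    intro i _
    by_cases hic : i = c
    · subst hic; simp [hg, hcne1]
    · simp only [hg, if_neg hic]
      by_cases h1 : T.degree i = 1 <;> simp [h1]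
  have hScard : S.card = ∑ i : I, (if T.degree i = 1 then 1 else 0) := by
    rw [hS, Finset.card_filter]
  have hsum3 : ∑ i, g i + S.card = 2 * Fintype.card I + 1 := by
    rw [hScard, ← Finset.sum_add_distrib, hsum2, Finset.sum_add_distrib,
      Finset.sum_const, Finset.sum_ite_eq' Finset.univ c (fun _ => 1)]
    simp [mul_comm]
  have hgsum : ∑ i, g i ≤ 2 * (Fintype.card I - 1) := hsum ▸ Finset.sum_le_sum hgle
  have hS3 : 3 ≤ S.card := by omega
  -- V is nonempty: a leaf bag strictly contains its neighbor's bag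
  obtain ⟨i0, hi0⟩ := Finset.card_pos.mp (by omega : 0 < S.card)
  have hd0 : T.degree i0 = 1 := by simpa [hS] using hi0
  obtain ⟨j0, hj0⟩ := hadj i0
  obtain ⟨v0, hv0, -⟩ := Finset.exists_of_ssubset (hleaf i0 j0 hd0 hj0)
  have : Nonempty V := ⟨v0⟩
  -- each leaf has an exclusive vertex
  have key : ∀ i : I, T.degree i = 1 →
      ∃ j v, T.Adj i j ∧ X i \ X j = {v} ∧ v ∈ X i ∧ v ∉ X j := by
    intro i hi
    obtain ⟨j, hj⟩ := hadj i
    have hsub := hleaf i j hi hj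
    rcases hnice i j hj with h | ⟨v, hv, hXi⟩ | ⟨v, hv, hXj⟩
    · exact absurd h.symm hsub.ne
    · exact ⟨j, v, hj, by rw [hXi, Finset.insert_sdiff_cancel hv],
        hXi ▸ Finset.mem_insert_self v (X j), hv⟩
    · exact absurd (hsub.subset (hXj ▸ Finset.mem_insert_self v (X i))) hv
  choose! jf vf hja hsd hvm hvn using key
  -- injectivity of exclusive vertices on leaves
  have hinj : Set.InjOn vf ↑S := by
    intro i1 h1 i2 h2 hv
    by_contra hne
    have hd1 : T.degree i1 = 1 := by simpa [hS] using h1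
    have hd2 : T.degree i2 = 1 := by simpa [hS] using h2
    exact hexcl i1 (jf i1) (vf i1) hd1 (hja i1 hd1) (hvn i1 hd1) (hvm i1 hd1) i2
      (fun h => hne h.symm) (hv ▸ hvm i2 hd2)
  have himg : 3 ≤ (S.image vf).card := by
    rw [Finset.card_image_of_injOn hinj]; exact hS3
  have hns : ¬ (S.image vf ⊆ {s, d}) := by
    intro hsub
    have h1 := Finset.card_le_card hsub
    have h2 : ({s, d} : Finset V).card ≤ 2 := (Finset.card_insert_le _ _).trans (by simp)
    omega
  obtain ⟨x, hxmem, hxnot⟩ := Finset.not_subset.mp hns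
  obtain ⟨i, hiS, hxi⟩ := Finset.mem_image.mp hxmem
  have hd1 : T.degree i = 1 := by simpa [hS] using hiS
  subst hxi
  simp only [Finset.mem_insert, Finset.mem_singleton, not_or] at hxnot
  exact ⟨i, jf i, vf i, hd1, hja i hd1, hsd i hd1, hxnot.1, hxnot.2⟩
end

section
/- Let G be a finite simple graph on vertex set V with two distinguished terminal vertices s ≠ d, and suppose V contains at least one vertex other than s and d. Let (T, X) be a nice tree decomposition of G of width at most w with at least two bags, such that for every leaf index i of T with unique neighbor j, X j ⊊ X i. Then there exists a vertex v ∈ V with v ∉ {s, d} whose degree in G is at most w + 1 and such that the star-mesh elimination of v from G has treewidth at most w. -/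
/-- The star-mesh elimination of the vertex `v` from `G`: the graph on the vertices of
`G` other than `v` in which two distinct vertices are adjacent iff they were adjacent in
`G` or were both `G`-neighbors of `v`. -/
def starMesh {V : Type*} (G : SimpleGraph V) (v : V) : SimpleGraph {x : V // x ≠ v} where
  Adj x y := x ≠ y ∧ (G.Adj x.1 y.1 ∨ (G.Adj x.1 v ∧ G.Adj y.1 v))
  symm := ⟨by
    rintro x y ⟨hxy, h⟩
    exact ⟨hxy.symm, h.imp (fun h' => h'.symm) fun h' => ⟨h'.2, h'.1⟩⟩⟩
  loopless := ⟨fun x h => h.1 rfl⟩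

/-!
A leaf bag that strictly contains its neighbour's bag has a vertex living in that bag only; all
its neighbours lie in the bag, so eliminating it costs nothing. A nontrivial tree has two leaves,
hence two such private vertices, and if both are terminals then `s` lives only in a leaf bag
`X a` and `d` only in a leaf bag `X b`. Root the tree at `b` and take a deepest bag `X l` that
loses a non-terminal vertex `u` towards the root, or `X b` if no bag does: every bag of `u` lies
below `l`, and below `l` nothing but terminals is lost, so the neighbours of `u` lie in
`X l ∪ {s}`. Replacing `u` by `s` in all bags of `u` (these include `X a` whenever `s` is a
neighbour of `u`) gives a tree decomposition of width `w` of the star-mesh elimination of `u`.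
-/

open SimpleGraph

namespace SimpleGraph

variable {I : Type*} {T : SimpleGraph I}

open Classical in
noncomputable def parent (T : SimpleGraph I) (r x : I) : I :=
  if h : ∃ y, T.Adj x y ∧ T.dist r y + 1 = T.dist r x then h.choose else x

def descendants (T : SimpleGraph I) (r l : I) : Set I :=
  {y | ∃ n, (T.parent r)^[n] y = l}

theorem parent_self (r : I) : T.parent r r = r := by
  simp [parent]

theorem iterate_parent_self (r : I) (n : ℕ) : (T.parent r)^[n] r = r :=
  Function.iterate_fixed (parent_self r) n

namespace IsTree

theorem exists_adj_dist_add_one (hT : T.IsTree) (r : I) {x : I} (hx : x ≠ r) :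
    ∃ y, T.Adj x y ∧ T.dist r y + 1 = T.dist r x := by
  obtain ⟨p, -, hp⟩ := hT.connected.exists_path_of_dist x r
  have hnil : ¬p.Nil := Walk.not_nil_of_ne hx
  refine ⟨p.snd, p.adj_snd hnil, ?_⟩
  have hsnd : T.dist p.snd r ≤ p.tail.length := dist_le _
  have htail := p.length_tail_add_one hnil
  rw [dist_comm] at hp hsnd
  rcases hT.dist_eq_dist_add_one_of_adj r (p.adj_snd hnil) with h | h <;> omega

theorem eq_of_adj_of_dist_add_one (hT : T.IsTree) {r x y z : I} (hy : T.Adj x y)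
    (hz : T.Adj x z) (hdy : T.dist r y + 1 = T.dist r x)
    (hdz : T.dist r z + 1 = T.dist r x) : y = z := by
  classical
  obtain ⟨q, hq, hql⟩ := hT.connected.exists_path_of_dist r x
  suffices key : ∀ y, T.Adj x y → T.dist r y + 1 = T.dist r x → y = q.penultimate from
    (key y hy hdy).trans (key z hz hdz).symm
  intro y hy hdy
  apply hT.isAcyclic.eq_penultimate_of_adj_end hq hy
  by_contra hyq
  obtain ⟨p, hp, hpl⟩ := hT.connected.exists_path_of_dist r y
  have hx := hT.isAcyclic.mem_support_of_ne_mem_support_of_adj_of_isPath hp hq hy.symm hyq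
  have h1 : T.dist r x ≤ (p.takeUntil x hx).length := dist_le _
  have h2 := p.length_takeUntil_le_length hx
  omega

theorem adj_parent (hT : T.IsTree) (r : I) {x : I} (hx : x ≠ r) : T.Adj x (T.parent r x) := by
  have h := hT.exists_adj_dist_add_one r hx
  rw [parent, dif_pos h]
  exact h.choose_spec.1

theorem dist_parent_add_one (hT : T.IsTree) (r : I) {x : I} (hx : x ≠ r) :
    T.dist r (T.parent r x) + 1 = T.dist r x := by
  have h := hT.exists_adj_dist_add_one r hx
  rw [parent, dif_pos h]
  exact h.choose_spec.2

theorem parent_eq_of_adj (hT : T.IsTree) (r : I) {x y : I} (hxy : T.Adj x y)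
    (hd : T.dist r y + 1 = T.dist r x) : T.parent r x = y := by
  have hx : x ≠ r := by
    rintro rfl
    simp at hd
  exact hT.eq_of_adj_of_dist_add_one (hT.adj_parent r hx) hxy (hT.dist_parent_add_one r hx) hd

theorem parent_eq_or_parent_eq (hT : T.IsTree) (r : I) {x y : I} (hxy : T.Adj x y) :
    T.parent r x = y ∨ T.parent r y = x := by
  rcases hT.dist_eq_dist_add_one_of_adj r hxy with h | h
  · exact .inl (hT.parent_eq_of_adj r hxy h.symm)
  · exact .inr (hT.parent_eq_of_adj r hxy.symm h.symm)

theorem iterate_parent_dist (hT : T.IsTree) (r x : I) : (T.parent r)^[T.dist r x] x = r := by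
  induction h : T.dist r x generalizing x with
  | zero => exact ((hT.connected.dist_eq_zero_iff).1 h).symm
  | succ n ih =>
    have hx : x ≠ r := by
      rintro rfl
      simp at h
    rw [Function.iterate_succ_apply]
    exact ih _ (by have := hT.dist_parent_add_one r hx; omega)

theorem mem_descendants_root (hT : T.IsTree) (r x : I) : x ∈ T.descendants r r :=
  ⟨_, hT.iterate_parent_dist r x⟩

theorem dist_lt_of_iterate_parent (hT : T.IsTree) {r l : I} (hl : l ≠ r) (n : ℕ) {y : I}
    (hy : (T.parent r)^[n + 1] y = l) : T.dist r l < T.dist r y := by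
  have hyr : y ≠ r := fun h => hl (by rw [← hy, h, iterate_parent_self])
  have hdy := hT.dist_parent_add_one r hyr
  rw [Function.iterate_succ_apply] at hy
  cases n with
  | zero =>
    rw [Function.iterate_zero_apply] at hy
    rw [hy] at hdy
    omega
  | succ n =>
    have := hT.dist_lt_of_iterate_parent hl n hy
    omega

theorem subset_descendants (hT : T.IsTree) (r : I) {S : Set I} (hS : (T.induce S).Connected)
    {l : I} (hl : l ∈ S) (hpl : T.parent r l ∉ S) : S ⊆ T.descendants r l := by
  have step : ∀ a c : S, (T.induce S).Adj a c →
      a.1 ∈ T.descendants r l → c.1 ∈ T.descendants r l := by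
    rintro a c (hac : T.Adj a c) ⟨n, hn⟩
    rcases hT.parent_eq_or_parent_eq r hac with h | h
    · cases n with
      | zero => exact absurd (hn ▸ h ▸ c.2) hpl
      | succ n => exact ⟨n, by rwa [Function.iterate_succ_apply, h] at hn⟩
    · exact ⟨n + 1, by rw [Function.iterate_succ_apply, h, hn]⟩
  intro y hy
  obtain ⟨W⟩ := hS ⟨l, hl⟩ ⟨y, hy⟩
  suffices ∀ a b : S, (T.induce S).Walk a b → a.1 ∈ T.descendants r l →
      b.1 ∈ T.descendants r l from this _ _ W ⟨0, rfl⟩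
  intro a b W
  induction W with
  | nil => exact id
  | cons h _ ih => exact fun ha => ih (step _ _ h ha)

end IsTree

end SimpleGraph

section Bags

variable {V I : Type*} [DecidableEq V] {T : SimpleGraph I} {X : I → Finset V} {Z : Finset V}

theorem subset_union_of_mem_descendants {r l : I}
    (h : ∀ n y, (T.parent r)^[n + 1] y = l → X y ⊆ X (T.parent r y) ∪ Z) :
    ∀ y ∈ T.descendants r l, X y ⊆ X l ∪ Z := by
  rintro y ⟨n, hn⟩
  induction n generalizing y with
  | zero => exact hn ▸ Finset.subset_union_left
  | succ n ih =>
    refine (h n y hn).trans (Finset.union_subset (ih _ ?_) Finset.subset_union_right)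
    rwa [Function.iterate_succ_apply] at hn

theorem SimpleGraph.IsTree.exists_bag_covering_support [Finite I] (hT : T.IsTree)
    (hX : ∀ v, (T.induce {i | v ∈ X i}).Connected) (r : I) {u₀ : V} {i₀ : I}
    (hu₀ : u₀ ∈ X i₀) (hu₀Z : u₀ ∉ Z) :
    ∃ u ∉ Z, ∃ l, u ∈ X l ∧ (∀ i, u ∈ X i → X i ⊆ X l ∪ Z) ∧
      (u ∈ X r → l = r) := by
  by_cases hF : ∃ l, ¬X l ⊆ X (T.parent r l) ∪ Z
  · obtain ⟨l, hlF, hmax⟩ := Set.exists_max_image {l | ¬X l ⊆ X (T.parent r l) ∪ Z}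
      (T.dist r) (Set.toFinite _) hF
    have hlr : l ≠ r := by
      rintro rfl
      simp [parent_self] at hlF
    obtain ⟨u, hul, hu⟩ := Finset.not_subset.1 hlF
    rw [Finset.mem_union, not_or] at hu
    have hbelow : {i | u ∈ X i} ⊆ T.descendants r l := hT.subset_descendants r (hX u) hul hu.1
    have hcover : ∀ i ∈ T.descendants r l, X i ⊆ X l ∪ Z := subset_union_of_mem_descendants
      fun n y hy => by
        by_contra hyF
        exact (hmax y hyF).not_gt (hT.dist_lt_of_iterate_parent hlr n hy)
    refine ⟨u, hu.2, l, hul, fun i hi => hcover i (hbelow hi), fun hur => ?_⟩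
    obtain ⟨n, hn⟩ := hbelow hur
    exact hn.symm.trans (iterate_parent_self r n)
  · push Not at hF
    have hcover : ∀ i, X i ⊆ X r ∪ Z := fun i =>
      subset_union_of_mem_descendants (fun _ y _ => hF y) i (hT.mem_descendants_root r i)
    have hu₀r : u₀ ∈ X r := by
      simpa [hu₀Z] using hcover i₀ hu₀
    exact ⟨u₀, hu₀Z, r, hu₀r, fun i _ => hcover i, fun _ => rfl⟩

end Bags

theorem Finset.card_erase_insert_le {α : Type*} [DecidableEq α] {s : Finset α} {a b : α}
    (hb : b ∈ s) : ((insert a s).erase b).card ≤ s.card := by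
  by_cases hab : a = b
  · rw [hab, Finset.erase_insert_eq_erase]
    exact Finset.card_erase_le
  · rw [Finset.erase_insert_of_ne hab]
    exact (Finset.card_insert_le _ _).trans_eq (Finset.card_erase_add_one hb)

theorem SimpleGraph.degree_le_card_of_adj_mem {V : Type*} [DecidableEq V] {G : SimpleGraph V}
    {v t : V} [Fintype (G.neighborSet v)] {B : Finset V} (hv : v ∈ B)
    (hN : ∀ x, G.Adj v x → x ∈ B ∨ x = t) : G.degree v ≤ B.card := by
  rw [← card_neighborFinset_eq_degree]
  refine (Finset.card_le_card fun x hx => ?_).trans (Finset.card_erase_insert_le (a := t) hv)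
  rw [mem_neighborFinset] at hx
  rw [Finset.mem_erase, Finset.mem_insert]
  exact ⟨hx.ne', (hN x hx).symm⟩


theorem eq_of_mem_of_forall_adj_eq {V I : Type*} {T : SimpleGraph I} {X : I → Finset V}
    {p : V} {g j : I} (hconn : (T.induce {i | p ∈ X i}).Connected)
    (hg : ∀ x, T.Adj g x → x = j) (hpg : p ∈ X g) (hpj : p ∉ X j) {i : I}
    (hpi : p ∈ X i) : i = g := by
  by_contra hig
  obtain ⟨W⟩ := hconn ⟨g, hpg⟩ ⟨i, hpi⟩
  have hnil : ¬W.Nil := Walk.not_nil_of_ne fun h => hig (congrArg Subtype.val h).symm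
  have hsnd : W.snd.1 = j := hg _ (W.adj_snd hnil)
  exact hpj (hsnd ▸ W.snd.2)

namespace IsTreeDecomp

variable {V I : Type*} {G : SimpleGraph V} {T : SimpleGraph I} {X : I → Finset V}

theorem comap_equiv {J : Type*} (htd : IsTreeDecomp G T X) (e : J ≃ I) :
    IsTreeDecomp G (T.comap e) (X ∘ e) where
  isTree := (Iso.isTree_iff (Iso.comap e T)).2 htd.isTree
  mem_bag v := by
    obtain ⟨i, hi⟩ := htd.mem_bag v
    exact ⟨e.symm i, by simpa using hi⟩
  edge_bag u v huv := by
    obtain ⟨i, hi⟩ := htd.edge_bag u v huv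
    exact ⟨e.symm i, by simpa using hi⟩
  support_connected v := by
    let f : T.induce {i | v ∈ X i} →g (T.comap e).induce {j | v ∈ X (e j)} :=
      { toFun := fun i => ⟨e.symm i, by
          rw [Set.mem_ofPred_eq, e.apply_symm_apply]
          exact i.2⟩
        map_rel' := fun {i i'} h => by simpa using h }
    exact (htd.support_connected v).map f fun j =>
      ⟨⟨e j, j.2⟩, Subtype.ext (e.symm_apply_apply j)⟩

theorem treewidthLE [Finite I] {w : ℕ} (htd : IsTreeDecomp G T X)
    (hw : ∀ i, (X i).card ≤ w + 1) : TreewidthLE G w :=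
  ⟨_, inferInstance, _, _, htd.comap_equiv (Finite.equivFin I).symm, fun _ => hw _⟩

theorem exists_private_of_leaf (htd : IsTreeDecomp G T X) {g : I}
    [Fintype (T.neighborSet g)] (hg : T.degree g = 1) (hleaf : ∀ j, T.Adj g j → X j ⊂ X g) :
    ∃ p, ∀ i, p ∈ X i ↔ i = g := by
  obtain ⟨j, hgj, huniq⟩ := degree_eq_one_iff_existsUnique_adj.1 hg
  obtain ⟨p, hpg, hpj⟩ := Finset.exists_of_ssubset (hleaf j hgj)
  exact ⟨p, fun i => ⟨eq_of_mem_of_forall_adj_eq (htd.support_connected p) huniq hpg hpj,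
    fun h => h ▸ hpg⟩⟩

section StarMesh

variable [DecidableEq V]

-- `t = v` is allowed: then the bags are just those of `X` without `v`.
theorem treewidthLE_starMesh [Finite I] {w : ℕ} (htd : IsTreeDecomp G T X)
    (hw : ∀ i, (X i).card ≤ w + 1) {v t : V} {m : I} (hvm : v ∈ X m)
    (hN : ∀ x, G.Adj v x → x ∈ X m ∨ x = t) (ht : ∀ i, t ∈ X i → v ∈ X i) :
    TreewidthLE (starMesh G v) w := by
  let C : I → Finset V := fun i => if v ∈ X i then insert t (X i) else X i
  have hC : ∀ x i, x ∈ C i ↔ x ∈ X i ∨ x = t ∧ v ∈ X i := by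
    intro x i
    by_cases hvi : v ∈ X i <;> simp [C, hvi, or_comm]
  refine IsTreeDecomp.treewidthLE (X := fun i => (C i).subtype (· ≠ v))
    ⟨htd.isTree, fun x => ?_, ?_, fun x => ?_⟩ fun i => ?_
  · obtain ⟨i, hi⟩ := htd.mem_bag x
    exact ⟨i, by simp [hC, hi]⟩
  · rintro x y ⟨-, hxy | ⟨hxv, hyv⟩⟩
    · obtain ⟨i, hi⟩ := htd.edge_bag x y hxy
      exact ⟨i, by simp [hC, hi]⟩
    · refine ⟨m, ?_, ?_⟩ <;> simp only [Finset.mem_subtype, hC, hvm, and_true]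
      exacts [hN x hxv.symm, hN y hyv.symm]
  · by_cases hxt : x.1 = t
    · have hsupp : {i | x ∈ (C i).subtype (· ≠ v)} = {i | v ∈ X i} := by
        ext i
        simpa [hC, hxt] using ht i
      exact hsupp ▸ htd.support_connected v
    · have hsupp : {i | x ∈ (C i).subtype (· ≠ v)} = {i | x.1 ∈ X i} := by
        ext i
        simp [hC, hxt]
      exact hsupp ▸ htd.support_connected x
  · rw [Finset.card_subtype, Finset.filter_ne']
    by_cases hvi : v ∈ X i
    · simpa [C, hvi] using (Finset.card_erase_insert_le hvi).trans (hw i)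
    · simpa [C, hvi, Finset.erase_eq_of_notMem hvi] using hw i

end StarMesh

variable [Finite I] [Fintype V] [DecidableRel G.Adj] {w : ℕ}

theorem degree_le_and_treewidthLE_starMesh (htd : IsTreeDecomp G T X)
    (hw : ∀ i, (X i).card ≤ w + 1) {v t : V} {m : I} (hvm : v ∈ X m)
    (hN : ∀ x, G.Adj v x → x ∈ X m ∨ x = t) (ht : ∀ i, t ∈ X i → v ∈ X i) :
    G.degree v ≤ w + 1 ∧ TreewidthLE (starMesh G v) w := by
  classical
  exact ⟨(degree_le_card_of_adj_mem hvm hN).trans (hw m), htd.treewidthLE_starMesh hw hvm hN ht⟩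

theorem degree_le_and_treewidthLE_starMesh_of_private (htd : IsTreeDecomp G T X)
    (hw : ∀ i, (X i).card ≤ w + 1) {p : V} {g : I} (hp : ∀ i, p ∈ X i ↔ i = g) :
    G.degree p ≤ w + 1 ∧ TreewidthLE (starMesh G p) w := by
  refine htd.degree_le_and_treewidthLE_starMesh hw ((hp g).2 rfl) (t := p)
    (fun x hpx => .inl ?_) fun _ => id
  obtain ⟨i, hpi, hxi⟩ := htd.edge_bag p x hpx
  exact (hp i).1 hpi ▸ hxi

theorem exists_elimination_of_private_terminals (htd : IsTreeDecomp G T X)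
    (hw : ∀ i, (X i).card ≤ w + 1) {s d : V} {a b : I} (hs : ∀ i, s ∈ X i → i = a)
    (hd : ∀ i, d ∈ X i → i = b) (hex : ∃ v, v ≠ s ∧ v ≠ d) :
    ∃ v, v ≠ s ∧ v ≠ d ∧ G.degree v ≤ w + 1 ∧ TreewidthLE (starMesh G v) w := by
  classical
  obtain ⟨u₀, hu₀s, hu₀d⟩ := hex
  obtain ⟨i₀, hi₀⟩ := htd.mem_bag u₀
  obtain ⟨u, huZ, l, hul, hcover, hroot⟩ := htd.isTree.exists_bag_covering_support
    htd.support_connected b (Z := {s, d}) hi₀ (by simp [hu₀s, hu₀d])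
  simp only [Finset.mem_insert, Finset.mem_singleton, not_or] at huZ
  have hN : ∀ x, G.Adj u x → x ∈ X l ∨ x = s := by
    intro x hux
    obtain ⟨i, hui, hxi⟩ := htd.edge_bag u x hux
    have hx := hcover i hui hxi
    simp only [Finset.mem_union, Finset.mem_insert, Finset.mem_singleton] at hx
    rcases hx with hx | hx | rfl
    · exact .inl hx
    · exact .inr hx
    · obtain rfl := hd i hxi
      exact .inl (hroot hui ▸ hxi)
  refine ⟨u, huZ.1, huZ.2, ?_⟩
  by_cases hua : u ∈ X a
  · exact htd.degree_le_and_treewidthLE_starMesh hw hul hN fun i hsi => hs i hsi ▸ hua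
  · refine htd.degree_le_and_treewidthLE_starMesh hw hul (t := u) (fun x hux => .inl ?_)
      fun _ => id
    refine (hN x hux).resolve_right ?_
    rintro rfl
    obtain ⟨i, hui, hsi⟩ := htd.edge_bag u x hux
    exact hua (hs i hsi ▸ hui)

end IsTreeDecomp

theorem exists_low_degree_elimination_general {V I : Type*} [Fintype V]
    [Fintype I]
    (G : SimpleGraph V) [DecidableRel G.Adj] (s d : V) (w : ℕ)
    (hex : ∃ v : V, v ≠ s ∧ v ≠ d)
    (T : SimpleGraph I) [DecidableRel T.Adj] (X : I → Finset V)
    (htd : IsTreeDecomp G T X)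
    (hw : ∀ i : I, (X i).card ≤ w + 1)
    (h2 : 2 ≤ Fintype.card I)
    (hleaf : ∀ i j : I, T.degree i = 1 → T.Adj i j → X j ⊂ X i) :
    ∃ v : V, v ≠ s ∧ v ≠ d ∧ G.degree v ≤ w + 1 ∧ TreewidthLE (starMesh G v) w := by
  have : Nontrivial I := Fintype.one_lt_card_iff_nontrivial.1 h2
  obtain ⟨a, b, hab, ha, hb⟩ := htd.isTree.exists_ne_and_degree_eq_one
  obtain ⟨p, hp⟩ := htd.exists_private_of_leaf ha (hleaf a · ha)
  obtain ⟨q, hq⟩ := htd.exists_private_of_leaf hb (hleaf b · hb)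
  by_cases hp' : p ≠ s ∧ p ≠ d
  · exact ⟨p, hp'.1, hp'.2, htd.degree_le_and_treewidthLE_starMesh_of_private hw hp⟩
  by_cases hq' : q ≠ s ∧ q ≠ d
  · exact ⟨q, hq'.1, hq'.2, htd.degree_le_and_treewidthLE_starMesh_of_private hw hq⟩
  have hpq : p ≠ q := fun h => hab ((hp b).1 (h ▸ (hq b).2 rfl)).symm
  have hterm : p = s ∧ q = d ∨ p = d ∧ q = s := by grind
  obtain ⟨hps, hqd⟩ | ⟨hpd, hqs⟩ := hterm
  · exact htd.exists_elimination_of_private_terminals hw (fun i => hps ▸ (hp i).1)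
      (fun i => hqd ▸ (hq i).1) hex
  · exact htd.exists_elimination_of_private_terminals hw (fun i => hqs ▸ (hq i).1)
      (fun i => hpd ▸ (hp i).1) hex

/-- Given a nice tree decomposition of width at most `w` with at least two bags in which
every leaf bag strictly contains its parent bag, there is a non-terminal vertex of degree
at most `w + 1` whose star-mesh elimination does not increase the treewidth beyond
`w`. -/
theorem exists_low_degree_elimination {V I : Type*} [Fintype V] [DecidableEq V]
    [Fintype I] [DecidableEq I]
    (G : SimpleGraph V) [DecidableRel G.Adj] (s d : V) (hsd : s ≠ d) (w : ℕ)
    (hex : ∃ v : V, v ≠ s ∧ v ≠ d)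
    (T : SimpleGraph I) [DecidableRel T.Adj] (X : I → Finset V)
    (htd : IsTreeDecomp G T X) (hnice : IsNice T X)
    (hw : ∀ i : I, (X i).card ≤ w + 1)
    (h2 : 2 ≤ Fintype.card I)
    (hleaf : ∀ i j : I, T.degree i = 1 → T.Adj i j → X j ⊂ X i) :
    ∃ v : V, v ≠ s ∧ v ≠ d ∧ G.degree v ≤ w + 1 ∧ TreewidthLE (starMesh G v) w :=
  exists_low_degree_elimination_general G s d w hex T X htd hw h2 hleaf
end

section
/- (Reduction of two-terminal bounded-treewidth graphs.) Let G be a finite simple graph on n ≥ 2 vertices of treewidth at most w, and let s ≠ d be two terminal vertices of G. Then there is an ordering v₁, …, v_{n−2} of the vertices of G other than s and d such that, setting G₀ = G and letting G_i be the star-mesh elimination of v_i from G_{i−1} for i = 1, …, n−2, the degree of v_i in G_{i−1} is at most w + 1 for every i; the final graph G_{n−2} has vertex set {s, d}. -/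
/-- The star-mesh elimination of the vertex `v` from `G`, realized on the same ambient
vertex type: the eliminated vertex `v` becomes isolated (i.e. is removed from the vertex
set of the graph), and two remaining distinct vertices are adjacent iff they were
adjacent in `G` or were both `G`-neighbors of `v`. -/
def starMeshElim {V : Type*} (G : SimpleGraph V) (v : V) : SimpleGraph V where
  Adj x y := x ≠ y ∧ x ≠ v ∧ y ≠ v ∧ (G.Adj x y ∨ (G.Adj x v ∧ G.Adj y v))
  symm := ⟨by
    rintro x y ⟨hxy, hxv, hyv, h⟩
    exact ⟨hxy.symm, hyv, hxv, h.imp (fun h' => h'.symm) fun h' => ⟨h'.2, h'.1⟩⟩⟩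
  loopless := ⟨fun x h => h.1 rfl⟩

/-!
Add `d` to every bag and root the decomposition tree at a bag containing `s`, so that both
terminals lie in the root bag. Eliminating a vertex `v` whose neighbourhood lies in a single bag
keeps the decomposition valid, since that bag covers all new edges. Such a `v` exists among the
non-terminals: take one whose highest bag (the one closest to the root) is as deep as possible.
The bags containing a neighbour `u` of `v` form a subtree meeting the subtree of `v` and reaching
at least as high, so they contain the highest bag of `v`. That bag has at most `w + 2` vertices,
one of them `v` itself.
-/

namespace SimpleGraph

variable {V : Type*} {G : SimpleGraph V}

lemma Walk.IsPath.append_of_support_inter {u v w : V} {p : G.Walk u v} {q : G.Walk v w}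
    (hp : p.IsPath) (hq : q.IsPath) (h : ∀ y ∈ p.support, y ∈ q.support → y = v) :
    (p.append q).IsPath := by
  have hq' := hq.support_nodup
  rw [← q.cons_tail_support, List.nodup_cons] at hq'
  rw [Walk.isPath_def, Walk.support_append, List.nodup_append]
  refine ⟨hp.support_nodup, hq'.2, fun y hy z hz hyz => hq'.1 ?_⟩
  subst hyz
  exact h y hy (List.mem_of_mem_tail hz) ▸ hz

lemma exists_isPath_support_subset_of_connected_induce {B : Set V}
    (hB : (G.induce B).Connected) {u v : V} (hu : u ∈ B) (hv : v ∈ B) :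
    ∃ p : G.Walk u v, p.IsPath ∧ ∀ y ∈ p.support, y ∈ B := by
  classical
  obtain ⟨p⟩ := hB ⟨u, hu⟩ ⟨v, hv⟩
  refine ⟨(p.map (Embedding.induce B).toHom).bypass, Walk.bypass_isPath _, fun y hy => ?_⟩
  obtain ⟨⟨y, hyB⟩, -, rfl⟩ := List.mem_map.mp
    (Walk.support_map _ p ▸ Walk.support_bypass_subset_support _ hy)
  exact hyB

lemma IsAcyclic.eq_of_isPath (h : G.IsAcyclic) {u v : V} {p q : G.Walk u v} (hp : p.IsPath)
    (hq : q.IsPath) : p = q :=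
  congrArg Subtype.val ((h.subsingleton_path u v).elim ⟨p, hp⟩ ⟨q, hq⟩)

lemma ncard_neighborSet_le_card_sub_one [DecidableEq V] {v : V} {B : Finset V} (hv : v ∈ B)
    (hN : G.neighborSet v ⊆ B) :
    (G.neighborSet v).ncard ≤ B.card - 1 := by
  have hN' : G.neighborSet v ⊆ ↑(B.erase v) := fun u hu =>
    Finset.mem_erase.mpr ⟨(G.ne_of_adj hu).symm, hN hu⟩
  calc (G.neighborSet v).ncard ≤ (↑(B.erase v) : Set V).ncard :=
        Set.ncard_le_ncard hN' (Finset.finite_toSet _)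
    _ = B.card - 1 := by rw [Set.ncard_coe_finset, Finset.card_erase_of_mem hv]

namespace IsTree

lemma length_eq_dist (hG : G.IsTree) {u v : V} {p : G.Walk u v} (hp : p.IsPath) :
    p.length = G.dist u v := by
  obtain ⟨q, hq, hlen⟩ := hG.connected.exists_path_of_dist u v
  rw [← hlen, hG.isAcyclic.eq_of_isPath hp hq]

lemma dist_add_dist_of_mem_support (hG : G.IsTree) {u v z : V} {p : G.Walk u v}
    (hp : p.IsPath) (hz : z ∈ p.support) : G.dist u z + G.dist z v = G.dist u v := by
  classical
  rw [← hG.length_eq_dist (hp.takeUntil hz), ← hG.length_eq_dist (hp.dropUntil hz),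
    ← Walk.length_append, p.take_spec hz, hG.length_eq_dist hp]

lemma mem_support_of_dist_add_dist (hG : G.IsTree) {u v z : V} {p : G.Walk u v}
    (hp : p.IsPath) (h : G.dist u z + G.dist z v = G.dist u v) : z ∈ p.support := by
  obtain ⟨q₁, -, hq₁⟩ := hG.connected.exists_path_of_dist u z
  obtain ⟨q₂, -, hq₂⟩ := hG.connected.exists_path_of_dist z v
  have hq : (q₁.append q₂).IsPath :=
    Walk.isPath_of_length_eq_dist _ (by rw [Walk.length_append, hq₁, hq₂, h])
  rw [← hG.isAcyclic.eq_of_isPath hq hp, Walk.mem_support_append_iff]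
  exact Or.inl q₁.end_mem_support

lemma dist_eq_dist_add_dist_of_forall_dist_le (hG : G.IsTree) {B : Set V}
    (hB : (G.induce B).Connected) (r : V) {t z : V} (ht : t ∈ B) (hz : z ∈ B)
    (hmin : ∀ y ∈ B, G.dist r t ≤ G.dist r y) :
    G.dist r z = G.dist r t + G.dist t z := by
  obtain ⟨Q, hQ, hQB⟩ := exists_isPath_support_subset_of_connected_induce hB ht hz
  obtain ⟨R, hR, hRlen⟩ := hG.connected.exists_path_of_dist r t
  -- `R` meets `Q` only in `t`, because `t` is the vertex of `B` closest to `r`.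
  have hRQ : (R.append Q).IsPath := by
    refine hR.append_of_support_inter hQ fun y hyR hyQ => ?_
    have hsplit := hG.dist_add_dist_of_mem_support hR hyR
    have hty := hmin y (hQB y hyQ)
    exact (hG.connected.dist_eq_zero_iff (u := y) (v := t)).mp (by omega)
  rw [← hG.length_eq_dist hRQ, Walk.length_append, hRlen, hG.length_eq_dist hQ]

lemma mem_of_forall_dist_le (hG : G.IsTree) {A B : Set V} (hA : (G.induce A).Connected)
    (hB : (G.induce B).Connected) (r : V) {x a t : V} (hxA : x ∈ A) (hxB : x ∈ B)
    (haA : a ∈ A) (hamin : ∀ y ∈ A, G.dist r a ≤ G.dist r y)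
    (htB : t ∈ B) (htmin : ∀ y ∈ B, G.dist r t ≤ G.dist r y)
    (hle : G.dist r a ≤ G.dist r t) : t ∈ A := by
  -- `a` is also the highest vertex of `A ∪ B`, so `t` lies on the geodesic from `a` to `x`,
  -- which runs inside `A`.
  have hAB : (G.induce (A ∪ B)).Connected :=
    induce_union_connected hA.preconnected hB.preconnected ⟨x, hxA, hxB⟩
  have hat := hG.dist_eq_dist_add_dist_of_forall_dist_le hAB r (Or.inl haA) (Or.inr htB)
    fun y hy => hy.elim (hamin y) fun hyB => hle.trans (htmin y hyB)
  have hax := hG.dist_eq_dist_add_dist_of_forall_dist_le hA r haA hxA hamin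
  have htx := hG.dist_eq_dist_add_dist_of_forall_dist_le hB r htB hxB htmin
  obtain ⟨P, hP, hPA⟩ := exists_isPath_support_subset_of_connected_induce hA haA hxA
  exact hPA t (hG.mem_support_of_dist_add_dist hP (by omega))

end IsTree

end SimpleGraph

section TreeDecomposition

variable {V I : Type*} {G : SimpleGraph V} {T : SimpleGraph I} {X : I → Finset V}

lemma IsTreeDecomp.insert_bags [DecidableEq V] (hX : IsTreeDecomp G T X) (d : V) :
    IsTreeDecomp G T fun i => insert d (X i) where
  isTree := hX.isTree
  mem_bag v := (hX.mem_bag v).imp fun _ => Finset.mem_insert_of_mem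
  edge_bag u v huv := (hX.edge_bag u v huv).imp fun _ h =>
    ⟨Finset.mem_insert_of_mem h.1, Finset.mem_insert_of_mem h.2⟩
  support_connected v := by
    by_cases hvd : v = d
    · rw [show {i | v ∈ insert d (X i)} = Set.univ by ext; simp [hvd]]
      exact (SimpleGraph.induceUnivIso T).symm.connected_iff.mp hX.isTree.connected
    · rw [show {i | v ∈ insert d (X i)} = {i | v ∈ X i} by ext; simp [hvd]]
      exact hX.support_connected v

lemma IsTreeDecomp.starMeshElim_of_neighborSet_subset (hX : IsTreeDecomp G T X) {v : V}
    {i : I} (hN : G.neighborSet v ⊆ X i) : IsTreeDecomp (starMeshElim G v) T X where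
  isTree := hX.isTree
  mem_bag := hX.mem_bag
  edge_bag := by
    rintro x y ⟨-, -, -, hxy | ⟨hxv, hyv⟩⟩
    · exact hX.edge_bag x y hxy
    · exact ⟨i, hN hxv.symm, hN hyv.symm⟩
  support_connected := hX.support_connected

lemma IsTreeDecomp.exists_neighborSet_subset_bag (hX : IsTreeDecomp G T X) (r : I)
    {C : Finset V} (hC : C.Nonempty) (hG : ∀ u w, G.Adj u w → u ∈ C ∨ u ∈ X r) :
    ∃ v ∈ C, ∃ i, v ∈ X i ∧ G.neighborSet v ⊆ X i := by
  have hlow (u : V) : ∃ t, u ∈ X t ∧ ∀ j, u ∈ X j → T.dist r t ≤ T.dist r j :=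
    ⟨_, Function.argminOn_mem (T.dist r) {i | u ∈ X i} (hX.mem_bag u),
      fun _ hj => Function.argminOn_le (T.dist r) {i | u ∈ X i} hj⟩
  choose top htop hmin using hlow
  obtain ⟨v, hvC, hvmax⟩ := C.exists_max_image (fun u => T.dist r (top u)) hC
  refine ⟨v, hvC, top v, htop v, fun u hu => ?_⟩
  obtain ⟨x, hxu, hxv⟩ := hX.edge_bag u v (G.adj_symm hu)
  refine hX.isTree.mem_of_forall_dist_le (hX.support_connected u) (hX.support_connected v) r
    hxu hxv (htop u) (hmin u) (htop v) (hmin v) ?_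
  rcases hG u v (G.adj_symm hu) with huC | hur
  · exact hvmax u huC
  · exact (hmin u r hur).trans (by simp)

end TreeDecomposition

section Elimination

variable {V : Type*}

def EliminationDegreesLE (G : SimpleGraph V) (l : List V) (k : ℕ) : Prop :=
  ∀ i : Fin l.length, (((l.take i).foldl starMeshElim G).neighborSet (l.get i)).ncard ≤ k

lemma eliminationDegreesLE_cons {G : SimpleGraph V} {v : V} {l : List V} {k : ℕ} :
    EliminationDegreesLE G (v :: l) k ↔
      (G.neighborSet v).ncard ≤ k ∧ EliminationDegreesLE (starMeshElim G v) l k :=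
  Fin.forall_fin_succ

theorem IsTreeDecomp.exists_eliminationDegreesLE [DecidableEq V] {I : Type*}
    {T : SimpleGraph I} {X : I → Finset V} {G : SimpleGraph V} (hX : IsTreeDecomp G T X)
    {k : ℕ} (hbag : ∀ i, (X i).card ≤ k + 1) {K : Finset V} {r : I} (hK : K ⊆ X r)
    (C : Finset V) (hG : ∀ u w, G.Adj u w → u ∈ C ∨ u ∈ K) :
    ∃ l : List V, l.Nodup ∧ (∀ v, v ∈ l ↔ v ∈ C) ∧ EliminationDegreesLE G l k ∧
      ∀ x y, (l.foldl starMeshElim G).Adj x y → x ∈ K := by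
  induction C using Finset.strongInduction generalizing G with
  | H C ih =>
  rcases C.eq_empty_or_nonempty with rfl | hC
  · refine ⟨[], List.nodup_nil, by simp, fun i => i.elim0, fun x y hxy => ?_⟩
    simpa using hG x y hxy
  obtain ⟨v, hvC, i, hvi, hN⟩ :=
    hX.exists_neighborSet_subset_bag r hC fun u w huw => (hG u w huw).imp_right (@hK u)
  have hG' : ∀ u w, (starMeshElim G v).Adj u w → u ∈ C.erase v ∨ u ∈ K := by
    rintro u w ⟨-, huv, -, huw | ⟨huv', -⟩⟩
    · exact (hG u w huw).imp_left (Finset.mem_erase.mpr ⟨huv, ·⟩)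
    · exact (hG u v huv').imp_left (Finset.mem_erase.mpr ⟨huv, ·⟩)
  obtain ⟨l, hnd, hmem, hdeg, hfin⟩ :=
    ih _ (C.erase_ssubset hvC) (hX.starMeshElim_of_neighborSet_subset hN) hG'
  refine ⟨v :: l, List.nodup_cons.mpr ⟨fun h => by simpa using (hmem v).mp h, hnd⟩,
    fun u => ?_, eliminationDegreesLE_cons.mpr ⟨?_, hdeg⟩, hfin⟩
  · rw [List.mem_cons, hmem, Finset.mem_erase]
    by_cases huv : u = v <;> simp [huv, hvC]
  · exact (G.ncard_neighborSet_le_card_sub_one hvi hN).trans (by have := hbag i; omega)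

end Elimination

theorem reduction_of_bounded_treewidth_general {V : Type*} [Fintype V] [DecidableEq V]
    (G : SimpleGraph V) (w : ℕ)
    (htw : TreewidthLE G w) (s d : V) :
    ∃ l : List V, l.Nodup ∧ (∀ v : V, v ∈ l ↔ v ≠ s ∧ v ≠ d) ∧
      (∀ i : Fin l.length,
        (((l.take i).foldl starMeshElim G).neighborSet (l.get i)).ncard ≤ w + 1) ∧
      (∀ x y : V, (l.foldl starMeshElim G).Adj x y →
        (x = s ∨ x = d) ∧ (y = s ∨ y = d)) := by
  obtain ⟨I, -, T, X, hX, hbag⟩ := htw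
  obtain ⟨r, hsr⟩ := hX.mem_bag s
  have hK : {s, d} ⊆ insert d (X r) := by
    simp [Finset.insert_subset_iff, hsr]
  obtain ⟨l, hnd, hmem, hdeg, hfin⟩ := (hX.insert_bags d).exists_eliminationDegreesLE
    (fun i => (Finset.card_insert_le d (X i)).trans (Nat.succ_le_succ (hbag i))) hK
    {s, d}ᶜ fun u _ _ => (em (u ∈ ({s, d} : Finset V))).symm.imp_left Finset.mem_compl.mpr
  refine ⟨l, hnd, fun v => by simpa [not_or] using hmem v, hdeg, fun x y hxy => ?_⟩
  simpa using And.intro (hfin x y hxy) (hfin y x hxy.symm)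

/-- Reduction of two-terminal bounded-treewidth graphs: if `G` has `n ≥ 2` vertices and
treewidth at most `w`, and `s ≠ d` are two terminals, then the vertices other than `s`
and `d` can be ordered so that successive star-mesh eliminations in that order always
eliminate a vertex of current degree at most `w + 1`; the final graph has vertex set
`{s, d}` (all other vertices having been eliminated, i.e. isolated). -/
theorem reduction_of_bounded_treewidth {V : Type*} [Fintype V] [DecidableEq V]
    (G : SimpleGraph V) (n w : ℕ) (hn : Fintype.card V = n) (h2 : 2 ≤ n)
    (htw : TreewidthLE G w) (s d : V) (hsd : s ≠ d) :
    ∃ l : List V, l.Nodup ∧ (∀ v : V, v ∈ l ↔ v ≠ s ∧ v ≠ d) ∧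
      (∀ i : Fin l.length,
        (((l.take i).foldl starMeshElim G).neighborSet (l.get i)).ncard ≤ w + 1) ∧
      (∀ x y : V, (l.foldl starMeshElim G).Adj x y →
        (x = s ∨ x = d) ∧ (y = s ∨ y = d)) :=
  reduction_of_bounded_treewidth_general G w htw s d
end
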